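/- Let f = (f^{(1)},…,f^{(d)}) ∈ ℝ^{n×d}, let 0 ≠ w ∈ ℝ^d, a ∈ ℝⁿ, and λ > 0, and define E(x;f,a,w) = ½‖f−x‖_F² + λ‖xw−a‖ for x ∈ ℝ^{n×d}. Then E(·;f,a,w) has the unique global minimizer x̂ = f − m s wᵀ, where s = (fw−a)/‖fw−a‖ if fw ≠ a and s = 0 otherwise, and m = min{λ, ‖fw−a‖/‖w‖²}. -/

import Mathlib

/-!
Writing `x = x̂ + u`, the quadratic part of `E` changes by `-⟪f - x̂, u⟫ + ½‖u‖²`, and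
`f - x̂ = p wᵀ` for the vector `p = m s`, so `⟪f - x̂, u⟫ = ⟪p, u w⟫`. The choice of `m` makes
`p / λ` a subgradient of `‖·‖` at `x̂ w - a`: `‖p‖ ≤ λ` and `⟪p, x̂ w - a⟫ = λ ‖x̂ w - a‖`
(either `m = λ`, or `m < λ` and then `x̂ w = a`). Hence the penalty term grows by at least
`⟪p, u w⟫`, and `E x - E x̂ ≥ ½‖u‖² > 0` for `u ≠ 0`.
-/

open scoped RealInnerProductSpace

section Prox

variable {V W : Type*} [NormedAddCommGroup V] [InnerProductSpace ℝ V]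
  [NormedAddCommGroup W] [InnerProductSpace ℝ W]

theorem add_inner_le_mul_norm_add {lam : ℝ} {p y : W} (hp : ‖p‖ ≤ lam)
    (hpy : ⟪p, y⟫ = lam * ‖y‖) (u : W) : lam * ‖y‖ + ⟪p, u⟫ ≤ lam * ‖y + u‖ :=
  calc lam * ‖y‖ + ⟪p, u⟫ = ⟪p, y + u⟫ := by rw [inner_add_right, hpy]
    _ ≤ ‖p‖ * ‖y + u‖ := real_inner_le_norm _ _
    _ ≤ lam * ‖y + u‖ := by gcongr

/-- `hadj` says `f - xhat = Aᵀ p`; `hp` and `hpy` say that `p / λ` is a subgradient of `‖·‖`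
at `A xhat - a`. -/
theorem prox_energy_lt_of_certificate (A : V →ₗ[ℝ] W) {f xhat : V} {a p : W} {lam : ℝ}
    (hp : ‖p‖ ≤ lam) (hpy : ⟪p, A xhat - a⟫ = lam * ‖A xhat - a‖)
    (hadj : ∀ u, ⟪f - xhat, u⟫ = ⟪p, A u⟫) {x : V} (hx : x ≠ xhat) :
    1 / 2 * ‖f - xhat‖ ^ 2 + lam * ‖A xhat - a‖ < 1 / 2 * ‖f - x‖ ^ 2 + lam * ‖A x - a‖ := by
  set u := x - xhat
  have hu : 0 < ‖u‖ := norm_pos_iff.mpr (sub_ne_zero.mpr hx)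
  have hquad : ‖f - x‖ ^ 2 = ‖f - xhat‖ ^ 2 - 2 * ⟪p, A u⟫ + ‖u‖ ^ 2 := by
    rw [← hadj, ← norm_sub_sq_real, sub_sub, add_sub_cancel]
  have hpen := add_inner_le_mul_norm_add hp hpy (A u)
  rw [show A xhat - a + A u = A x - a by rw [map_sub]; abel] at hpen
  nlinarith

/-- `b - c • proxCertificate lam c b` is the block soft-thresholding of `b` at level `c λ`. -/
noncomputable def proxCertificate (lam c : ℝ) (b : W) : W := min lam (‖b‖ / c) • ‖b‖⁻¹ • b

variable {lam c : ℝ} (b : W)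

theorem norm_proxCertificate_le (hlam : 0 ≤ lam) (hc : 0 < c) :
    ‖proxCertificate lam c b‖ ≤ lam := by
  have hm : 0 ≤ min lam (‖b‖ / c) := le_min hlam (by positivity)
  rw [proxCertificate, norm_smul, norm_smul, Real.norm_of_nonneg hm, norm_inv, norm_norm]
  calc min lam (‖b‖ / c) * (‖b‖⁻¹ * ‖b‖) ≤ min lam (‖b‖ / c) * 1 := by
        gcongr; exact inv_mul_le_one_of_le₀ le_rfl (norm_nonneg b)
    _ ≤ lam := by rw [mul_one]; exact min_le_left _ _

theorem inner_proxCertificate (hlam : 0 ≤ lam) (hc : 0 < c) :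
    ⟪proxCertificate lam c b, b - c • proxCertificate lam c b⟫ =
      lam * ‖b - c • proxCertificate lam c b‖ := by
  rcases eq_or_ne b 0 with rfl | hb
  · simp [proxCertificate]
  have hB : 0 < ‖b‖ := norm_pos_iff.mpr hb
  set m := min lam (‖b‖ / c)
  have hm : 0 ≤ m := le_min hlam (by positivity)
  set t := 1 - c * m / ‖b‖
  have ht : 0 ≤ t := by
    rw [sub_nonneg, div_le_one hB, ← le_div_iff₀' hc]
    exact min_le_right _ _
  have hres : b - c • proxCertificate lam c b = t • b := by
    rw [proxCertificate, smul_smul, smul_smul, sub_smul, one_smul]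
    rfl
  rw [hres, proxCertificate, inner_smul_left, inner_smul_left, inner_smul_right,
    real_inner_self_eq_norm_sq, norm_smul, Real.norm_of_nonneg ht]
  simp only [conj_trivial]
  -- either `m = λ`, or `m = ‖b‖ / c` and then `t = 0`
  rcases min_cases lam (‖b‖ / c) with ⟨hml, -⟩ | ⟨hmc, -⟩
  · rw [hml]; field_simp
  · have : t = 0 := by simp only [t, m, hmc]; field_simp; ring
    rw [this]; ring

end Prox

section Frobenius

variable {ι κ : Type*}

theorem EuclideanSpace.real_norm_eq_sqrt_sum_sq [Fintype ι] (v : EuclideanSpace ℝ ι) :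
    ‖v‖ = √(∑ i, v i ^ 2) := by
  rw [← EuclideanSpace.real_norm_sq_eq, Real.sqrt_sq (norm_nonneg v)]

theorem toLp_normalize_eq_inv_norm_smul [Fintype ι] (v : ι → ℝ) :
    WithLp.toLp 2 (if v = 0 then 0 else fun i => v i / √(∑ i', v i' ^ 2)) =
      ‖WithLp.toLp 2 v‖⁻¹ • WithLp.toLp 2 v := by
  split_ifs with hv
  · simp [hv]
  · ext i
    simp [EuclideanSpace.real_norm_eq_sqrt_sum_sq, div_eq_inv_mul]

/-- A real `ι × κ` matrix as a vector of `EuclideanSpace ℝ (ι × κ)`, whose norm is the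
Frobenius norm. -/
def toFrob (x : ι → κ → ℝ) : EuclideanSpace ℝ (ι × κ) := WithLp.toLp 2 (Function.uncurry x)

theorem toFrob_injective : Function.Injective (toFrob : (ι → κ → ℝ) → _) := by
  intro x y h
  funext i j
  exact congrFun (congrArg WithLp.ofLp h) (i, j)

theorem norm_toFrob_sub_sq [Fintype ι] [Fintype κ] (x y : ι → κ → ℝ) :
    ‖toFrob x - toFrob y‖ ^ 2 = ∑ i, ∑ j, (x i j - y i j) ^ 2 := by
  rw [EuclideanSpace.real_norm_sq_eq, Fintype.sum_prod_type]
  rfl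

def frobMulVec [Fintype κ] (w : κ → ℝ) : EuclideanSpace ℝ (ι × κ) →ₗ[ℝ] EuclideanSpace ℝ ι where
  toFun x := WithLp.toLp 2 fun i => ∑ j, x (i, j) * w j
  map_add' x y := by ext i; simp [add_mul, Finset.sum_add_distrib]
  map_smul' r x := by ext i; simp [mul_assoc, Finset.mul_sum]

theorem frobMulVec_toFrob [Fintype κ] (w : κ → ℝ) (x : ι → κ → ℝ) :
    frobMulVec w (toFrob x) = WithLp.toLp 2 fun i => ∑ j, x i j * w j :=
  rfl

theorem frobMulVec_toFrob_outer [Fintype κ] (p : EuclideanSpace ℝ ι) (w : κ → ℝ) :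
    frobMulVec w (toFrob fun i j => p i * w j) = (∑ j, w j ^ 2) • p := by
  ext i
  simp only [frobMulVec_toFrob, PiLp.smul_apply, smul_eq_mul, Finset.sum_mul]
  exact Finset.sum_congr rfl fun j _ => by ring

theorem inner_toFrob_outer [Fintype ι] [Fintype κ] (p : EuclideanSpace ℝ ι) (w : κ → ℝ)
    (u : EuclideanSpace ℝ (ι × κ)) :
    ⟪toFrob fun i j => p i * w j, u⟫ = ⟪p, frobMulVec w u⟫ := by
  simp only [PiLp.inner_apply, Real.inner_apply, Fintype.sum_prod_type]
  refine Finset.sum_congr rfl fun i _ => ?_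
  rw [show (frobMulVec w u) i = ∑ j, u (i, j) * w j from rfl, Finset.mul_sum]
  exact Finset.sum_congr rfl fun j _ => by simp only [toFrob, Function.uncurry_apply_pair]; ring

end Frobenius

theorem second_order_tv_unique_prox_minimizer
    (n d : ℕ) (f : Fin n → Fin d → ℝ) (w : Fin d → ℝ) (hw : w ≠ 0)
    (a : Fin n → ℝ) (lam : ℝ) (hlam : 0 < lam)
    (E : (Fin n → Fin d → ℝ) → ℝ)
    (hE : ∀ x, E x = (1 / 2) * (∑ i, ∑ j, (f i j - x i j) ^ 2)
        + lam * Real.sqrt (∑ i, (∑ j, x i j * w j - a i) ^ 2))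
    (s : Fin n → ℝ)
    (hs : s = if (fun i => ∑ j, f i j * w j - a i) = (0 : Fin n → ℝ) then 0
        else fun i => (∑ j, f i j * w j - a i)
            / Real.sqrt (∑ i', (∑ j, f i' j * w j - a i') ^ 2))
    (mv : ℝ)
    (hmv : mv = min lam
        (Real.sqrt (∑ i, (∑ j, f i j * w j - a i) ^ 2) / (∑ j, (w j) ^ 2)))
    (xhat : Fin n → Fin d → ℝ)
    (hxhat : xhat = fun i j => f i j - mv * s i * w j) :
    ∀ x : Fin n → Fin d → ℝ, x ≠ xhat → E xhat < E x := by
  intro x hx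
  set A : EuclideanSpace ℝ (Fin n × Fin d) →ₗ[ℝ] EuclideanSpace ℝ (Fin n) := frobMulVec w
  set b := A (toFrob f) - WithLp.toLp 2 a
  set c := ∑ j, w j ^ 2
  set p := proxCertificate lam c b
  have hc : 0 < c := by
    have : 0 < ‖WithLp.toLp 2 w‖ ^ 2 := pow_pos (norm_pos_iff.mpr (by simpa using hw)) 2
    rwa [EuclideanSpace.real_norm_sq_eq] at this
  have hE' : ∀ y, E y =
      1 / 2 * ‖toFrob f - toFrob y‖ ^ 2 + lam * ‖A (toFrob y) - WithLp.toLp 2 a‖ := by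
    intro y
    rw [hE, norm_toFrob_sub_sq, EuclideanSpace.real_norm_eq_sqrt_sum_sq]
    rfl
  have hb : b = WithLp.toLp 2 fun i => ∑ j, f i j * w j - a i := rfl
  have hnb : ‖b‖ = √(∑ i, (∑ j, f i j * w j - a i) ^ 2) :=
    EuclideanSpace.real_norm_eq_sqrt_sum_sq b
  have hp : WithLp.toLp 2 (mv • s) = p := by
    rw [WithLp.toLp_smul, hs, toLp_normalize_eq_inv_norm_smul, ← hb, hmv, ← hnb]
    rfl
  have hfx : toFrob f - toFrob xhat = toFrob fun i j => p i * w j := by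
    rw [← hp, hxhat]; ext ⟨i, j⟩; simp [toFrob]
  have hAx : A (toFrob xhat) - WithLp.toLp 2 a = b - c • p := by
    rw [← sub_sub_cancel (toFrob f) (toFrob xhat), hfx, map_sub, frobMulVec_toFrob_outer,
      sub_right_comm]
  rw [hE', hE']
  refine prox_energy_lt_of_certificate A (norm_proxCertificate_le b hlam.le hc) ?_ ?_
    (toFrob_injective.ne hx)
  · rw [hAx]; exact inner_proxCertificate b hlam.le hc
  · intro u; rw [hfx]; exact inner_toFrob_outer p w u
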